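/- arXiv:2509.00871 — 2 statements merged into one kernel-verified Lean document; each statement's English description precedes it below -/
import Mathlib

section
/- Every rank-2 linear subsystem of Φ is infinite. -/
open scoped NNReal

noncomputable section

/-- The ambient vector space `V = ℝ³`. -/
abbrev V : Type := Fin 3 → ℝ

/-- The symmetric bilinear form with `⟨αᵢ,αⱼ⟩ = 1` if `i = j` and `-1` otherwise. -/
def B (x y : V) : ℝ := 2 * (∑ i, x i * y i) - (∑ i, x i) * (∑ i, y i)

/-- The associated quadratic form. -/
def Q (x : V) : ℝ := B x x

/-- The simple roots `α₁, α₂, α₃` (the standard basis vectors). -/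
def α (i : Fin 3) : V := Pi.single i 1

/-- The set of simple roots. -/
def Δ : Set V := Set.range α

/-- `f` is the reflection `r_{αᵢ} : x ↦ x - 2⟨αᵢ,x⟩αᵢ` for some `i` (note `⟨αᵢ,αᵢ⟩ = 1`). -/
def IsSimpleReflection (f : V ≃ₗ[ℝ] V) : Prop :=
  ∃ i : Fin 3, ∀ x : V, f x = x - (2 * B (α i) x) • α i

/-- The group `W ≤ GL(V)` generated by the three simple reflections:
the standard reflection representation of `U₃`. -/
def W : Subgroup (V ≃ₗ[ℝ] V) := Subgroup.closure {f | IsSimpleReflection f}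

/-- The root system `Φ = {w·αᵢ : w ∈ W, i ∈ {1,2,3}}`. -/
def Φ : Set V := {x | ∃ w ∈ W, ∃ i : Fin 3, x = w (α i)}

/-- `Span_{≥0}(X)`: the set of nonnegative linear combinations of elements of `X`. -/
def nnspan (X : Set V) : Set V := (Submodule.span ℝ≥0 X : Set V)

/-- The positive roots `Φ⁺ = Φ ∩ Span_{≥0}(Δ)`. -/
def Φpos : Set V := Φ ∩ nnspan Δ

/-- `R ⊆ Φ⁺` is closed if for all `a, b ∈ R`, `Span_{≥0}{a,b} ∩ Φ⁺ ⊆ R`. -/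
def IsClosedSet (R : Set V) : Prop := ∀ a ∈ R, ∀ b ∈ R, nnspan {a, b} ∩ Φpos ⊆ R

/-- `R` is a biclosed subset of `Φ⁺`. -/
def IsBiclosed (R : Set V) : Prop := R ⊆ Φpos ∧ IsClosedSet R ∧ IsClosedSet (Φpos \ R)

/-!
Roots satisfy `B x x = 1` and lie in the lattice of integer vectors with odd coordinate sum, on
which `B` takes odd integer values; hence `1 ≤ |B a b|` for any two roots. Pick independent roots
`a, b ∈ H` with `c = B a b ≥ 1` (replacing `b` by `-b` if necessary). The sequence `x₀ = a`,
`x₁ = b`, `x (n + 2) = 2c x (n + 1) - x n` stays in `H` and consists of roots, because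
`x (n + 2) = -r_{x (n + 1)} (x n)` and `B (x n) (x (n + 1)) = c` for all `n`. A functional vanishing
on `a` and equal to `1` on `b` maps it to a real sequence that increases strictly since `c ≥ 1`,
so the `x n` are pairwise distinct.
-/

open Module Function Set

def LinearMap.BilinForm.orthogonalGroup {R M : Type*} [CommRing R] [AddCommGroup M] [Module R M]
    (β : LinearMap.BilinForm R M) : Subgroup (M ≃ₗ[R] M) where
  carrier := {f | β.IsOrthogonal f}
  mul_mem' hf hg x y := (hf _ _).trans (hg x y)
  one_mem' _ _ := rfl
  inv_mem' {f} hf x y := by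
    simpa using (hf (f.symm x) (f.symm y)).symm

section ChebyshevSeq

variable {R M : Type*} [Ring R] [AddCommGroup M] [Module R M]

def chebyshevSeq (c : R) (a b : M) : ℕ → M
  | 0 => a
  | 1 => b
  | n + 2 => (2 * c) • chebyshevSeq c a b (n + 1) - chebyshevSeq c a b n

lemma map_chebyshevSeq {N : Type*} [AddCommGroup N] [Module R N] (f : M →ₗ[R] N) (c : R)
    (a b : M) (n : ℕ) : f (chebyshevSeq c a b n) = chebyshevSeq c (f a) (f b) n := by
  induction n using Nat.twoStepInduction with
  | zero => rfl
  | one => rfl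
  | more n ih₀ ih₁ => simp [chebyshevSeq, ih₀, ih₁]

lemma chebyshevSeq_mem (p : Submodule R M) {c : R} {a b : M} (ha : a ∈ p) (hb : b ∈ p)
    (n : ℕ) : chebyshevSeq c a b n ∈ p := by
  induction n using Nat.twoStepInduction with
  | zero => exact ha
  | one => exact hb
  | more n ih₀ ih₁ => exact p.sub_mem (p.smul_mem _ ih₁) ih₀

end ChebyshevSeq

lemma strictMono_chebyshevSeq {R : Type*} [CommRing R] [LinearOrder R] [IsStrictOrderedRing R]
    {c a b : R} (hc : 1 ≤ c) (ha : 0 ≤ a) (hab : a < b) : StrictMono (chebyshevSeq c a b) := by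
  have hstep : ∀ n, 0 ≤ chebyshevSeq c a b n ∧
      chebyshevSeq c a b n < chebyshevSeq c a b (n + 1) := by
    intro n
    induction n with
    | zero => exact ⟨ha, hab⟩
    | succ n ih =>
      obtain ⟨h₀, h₁⟩ := ih
      have hrec : chebyshevSeq c a b (n + 2) =
          2 * c * chebyshevSeq c a b (n + 1) - chebyshevSeq c a b n := rfl
      refine ⟨by linarith, ?_⟩
      rw [hrec]
      nlinarith
  exact strictMono_nat_of_lt_succ fun n => (hstep n).2

lemma chebyshevSeq_injective {K M : Type*} [Field K] [LinearOrder K] [IsStrictOrderedRing K]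
    [AddCommGroup M] [Module K M] {c : K} (hc : 1 ≤ c) {a b : M} (hb : b ∉ K ∙ a) :
    Injective (chebyshevSeq c a b) := by
  obtain ⟨f, hfb, hfa⟩ := Submodule.exists_dual_map_eq_bot_of_notMem hb inferInstance
  have hfa : f a = 0 := by
    simpa [hfa] using Submodule.mem_map_of_mem (f := f) (Submodule.mem_span_singleton_self a)
  have hf : ⇑((f b)⁻¹ • f) ∘ chebyshevSeq c a b = chebyshevSeq c 0 1 := funext fun n => by
    rw [comp_apply, map_chebyshevSeq]
    simp [hfa, hfb]
  exact Injective.of_comp (hf ▸ (strictMono_chebyshevSeq hc le_rfl zero_lt_one).injective)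

lemma exists_mem_notMem_span_singleton {K M : Type*} [DivisionRing K] [AddCommGroup M]
    [Module K M] {S : Set M} (hS : 1 < finrank K (Submodule.span K S)) :
    ∃ a ∈ S, ∃ b ∈ S, b ∉ K ∙ a := by
  by_contra! h
  obtain rfl | ⟨a, ha⟩ := S.eq_empty_or_nonempty
  · rw [Submodule.span_empty, finrank_bot] at hS
    omega
  · have hle := Submodule.finrank_mono (Submodule.span_le.2 fun b hb => h a ha b hb)
    have : finrank K (K ∙ a) ≤ 1 := by
      simpa using finrank_span_le_card (R := K) ({a} : Set M)
    omega

lemma B_expand (x y : V) :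
    B x y = 2 * (x 0 * y 0 + x 1 * y 1 + x 2 * y 2) - (x 0 + x 1 + x 2) * (y 0 + y 1 + y 2) := by
  simp [B, Fin.sum_univ_three]

def Bform : LinearMap.BilinForm ℝ V :=
  LinearMap.mk₂ ℝ B (fun _ _ _ => by simp only [B_expand, Pi.add_apply]; ring)
    (fun _ _ _ => by simp only [B_expand, Pi.smul_apply, smul_eq_mul]; ring)
    (fun _ _ _ => by simp only [B_expand, Pi.add_apply]; ring)
    (fun _ _ _ => by simp only [B_expand, Pi.smul_apply, smul_eq_mul]; ring)

@[simp]
lemma Bform_apply (x y : V) : Bform x y = B x y := rfl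

lemma B_comm (x y : V) : B x y = B y x := by
  simp only [B_expand]; ring

lemma B_sub_left (x y z : V) : B (x - y) z = B x z - B y z := LinearMap.map_sub₂ Bform x y z
lemma B_smul_left (t : ℝ) (x z : V) : B (t • x) z = t * B x z :=
  LinearMap.map_smul₂ Bform t x z
lemma B_sub_right (x y z : V) : B x (y - z) = B x y - B x z := map_sub (Bform x) y z
lemma B_smul_right (t : ℝ) (x z : V) : B x (t • z) = t * B x z := map_smul (Bform x) t z
lemma B_neg_right (x y : V) : B x (-y) = -B x y := map_neg (Bform x) y

lemma B_α_self (i : Fin 3) : B (α i) (α i) = 1 := by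
  simp only [B, α, Pi.single_apply, mul_ite, mul_one, mul_zero, Finset.sum_ite_eq']
  norm_num

def reflectionIn (v : V) (hv : B v v = 1) : V ≃ₗ[ℝ] V :=
  Module.reflection (x := v) (f := (2 : ℝ) • Bform v) (by simp [hv])

lemma reflectionIn_apply {v : V} (hv : B v v = 1) (x : V) :
    reflectionIn v hv x = x - (2 * B v x) • v := by
  simp [reflectionIn, Module.reflection_apply]

lemma IsSimpleReflection.exists_eq_reflectionIn {f : V ≃ₗ[ℝ] V} (hf : IsSimpleReflection f) :
    ∃ i, f = reflectionIn (α i) (B_α_self i) := by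
  obtain ⟨i, hi⟩ := hf
  exact ⟨i, LinearEquiv.ext fun x => by rw [hi, reflectionIn_apply]⟩

lemma reflectionIn_α_mem_W (i : Fin 3) : reflectionIn (α i) (B_α_self i) ∈ W :=
  Subgroup.subset_closure ⟨i, reflectionIn_apply _⟩

lemma isOrthogonal_reflectionIn {v : V} (hv : B v v = 1) :
    Bform.IsOrthogonal (reflectionIn v hv) := by
  intro x y
  simp only [Bform_apply, reflectionIn_apply, B_sub_left, B_sub_right, B_smul_left, B_smul_right,
    hv, B_comm x v]
  ring

lemma W_le_orthogonalGroup : W ≤ Bform.orthogonalGroup :=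
  Subgroup.closure_le _ |>.2 fun f hf => by
    obtain ⟨i, rfl⟩ := IsSimpleReflection.exists_eq_reflectionIn hf
    exact isOrthogonal_reflectionIn _

lemma B_self_of_mem_Φ {x : V} (hx : x ∈ Φ) : B x x = 1 := by
  obtain ⟨w, hw, i, rfl⟩ := hx
  rw [← Bform_apply, W_le_orthogonalGroup hw, Bform_apply, B_α_self]

lemma conj_reflectionIn {w : V ≃ₗ[ℝ] V} (hw : w ∈ Bform.orthogonalGroup) {v : V}
    (hv : B v v = 1) :
    w * reflectionIn v hv * w⁻¹ = reflectionIn (w v) (by rwa [← Bform_apply, hw]) := by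
  refine LinearEquiv.ext fun x => ?_
  have hBw : B v (w.symm x) = B (w v) x := by
    simpa using (hw v (w.symm x)).symm
  simp [reflectionIn_apply, hBw]

lemma sub_smul_mem_Φ {a x : V} (ha : a ∈ Φ) (hx : x ∈ Φ) : x - (2 * B a x) • a ∈ Φ := by
  obtain ⟨w, hw, i, rfl⟩ := ha
  obtain ⟨u, hu, j, rfl⟩ := hx
  refine ⟨w * reflectionIn (α i) (B_α_self i) * w⁻¹ * u,
    mul_mem (mul_mem (mul_mem hw (reflectionIn_α_mem_W i)) (inv_mem hw)) hu, j, ?_⟩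
  rw [LinearEquiv.mul_apply, conj_reflectionIn (W_le_orthogonalGroup hw), reflectionIn_apply]

lemma neg_mem_Φ {x : V} (hx : x ∈ Φ) : -x ∈ Φ := by
  simpa [B_self_of_mem_Φ hx, two_smul] using sub_smul_mem_Φ hx hx

def oddLattice : Set V :=
  {x | ∃ y : Fin 3 → ℤ, x = (fun i => (y i : ℝ)) ∧ Odd (∑ i, y i)}

lemma α_mem_oddLattice (i : Fin 3) : α i ∈ oddLattice :=
  ⟨Pi.single i 1, by ext j; simp [α, Pi.single_apply], by simp⟩

lemma exists_odd_B_eq {x z : V} (hx : x ∈ oddLattice) (hz : z ∈ oddLattice) :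
    ∃ m : ℤ, Odd m ∧ B x z = m := by
  obtain ⟨y, rfl, hy⟩ := hx
  obtain ⟨u, rfl, hu⟩ := hz
  exact ⟨2 * ∑ i, y i * u i - (∑ i, y i) * (∑ i, u i), (even_two_mul _).sub_odd (hy.mul hu),
    by push_cast [B]; rfl⟩

lemma reflectionIn_mapsTo_oddLattice {v : V} (hv : B v v = 1) (hvL : v ∈ oddLattice) :
    MapsTo (reflectionIn v hv) oddLattice oddLattice := by
  intro x hx
  obtain ⟨m, -, hm⟩ := exists_odd_B_eq hvL hx
  obtain ⟨u, rfl, -⟩ := hvL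
  obtain ⟨y, rfl, hy⟩ := hx
  refine ⟨y - (2 * m) • u, ?_, ?_⟩
  · ext i
    simp [reflectionIn_apply, hm]
  · simp only [Pi.sub_apply, Pi.smul_apply, smul_eq_mul, Finset.sum_sub_distrib,
      ← Finset.mul_sum]
    exact hy.sub_even ((even_two_mul m).mul_right _)

open Pointwise in
lemma Φ_subset_oddLattice : Φ ⊆ oddLattice := by
  have hW : W ≤ MulAction.stabilizer (V ≃ₗ[ℝ] V) oddLattice :=
    Subgroup.closure_le _ |>.2 fun f hf => by
      obtain ⟨i, rfl⟩ := IsSimpleReflection.exists_eq_reflectionIn hf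
      rw [SetLike.mem_coe, MulAction.mem_stabilizer_iff, ← image_smul]
      exact (Module.bijOn_reflection_of_mapsTo _
        (reflectionIn_mapsTo_oddLattice (B_α_self i) (α_mem_oddLattice i))).image_eq
  rintro _ ⟨w, hw, i, rfl⟩
  rw [← MulAction.mem_stabilizer_iff.1 (hW hw)]
  exact smul_mem_smul_set (α_mem_oddLattice i)

lemma one_le_abs_B_of_mem_Φ {a b : V} (ha : a ∈ Φ) (hb : b ∈ Φ) : 1 ≤ |B a b| := by
  obtain ⟨m, hm, hB⟩ := exists_odd_B_eq (Φ_subset_oddLattice ha) (Φ_subset_oddLattice hb)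
  rw [hB, ← Int.cast_abs]
  exact_mod_cast Int.one_le_abs (fun h => by simp [h] at hm)

lemma chebyshevSeq_mem_Φ {a b : V} (ha : a ∈ Φ) (hb : b ∈ Φ) (n : ℕ) :
    chebyshevSeq (B a b) a b n ∈ Φ := by
  set x := chebyshevSeq (B a b) a b
  have hpair : ∀ n, x n ∈ Φ ∧ x (n + 1) ∈ Φ ∧ B (x n) (x (n + 1)) = B a b := by
    intro n
    induction n with
    | zero => exact ⟨ha, hb, rfl⟩
    | succ n ih =>
      obtain ⟨h₀, h₁, hB⟩ := ih
      have hrec : x (n + 2) = (2 * B a b) • x (n + 1) - x n := rfl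
      have hrefl : x (n + 2) = -(x n - (2 * B (x (n + 1)) (x n)) • x (n + 1)) := by
        rw [hrec, B_comm (x (n + 1)), hB, neg_sub]
      refine ⟨h₁, hrefl ▸ neg_mem_Φ (sub_smul_mem_Φ h₁ h₀), ?_⟩
      rw [hrec, B_sub_right, B_smul_right, B_self_of_mem_Φ h₁, B_comm (x (n + 1)), hB]
      ring
  exact (hpair n).1

/-- Every rank-2 linear subsystem of `Φ` is infinite. -/
theorem rank2_linear_subsystem_infinite (H : Submodule ℝ V)
    (h2 : Module.finrank ℝ H = 2)
    (hspan : H = Submodule.span ℝ ((H : Set V) ∩ Φ)) :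
    ((H : Set V) ∩ Φ).Infinite := by
  set S := (H : Set V) ∩ Φ
  obtain ⟨a, ha, b, hb, hab⟩ : ∃ a ∈ S, ∃ b ∈ S, b ∉ ℝ ∙ a :=
    exists_mem_notMem_span_singleton (by rw [← hspan, h2]; norm_num)
  have hinf : ∀ b ∈ S, b ∉ ℝ ∙ a → 1 ≤ B a b → S.Infinite := fun b hb hab hc =>
    infinite_of_injective_forall_mem (chebyshevSeq_injective hc hab)
      fun n => ⟨chebyshevSeq_mem H ha.1 hb.1 n, chebyshevSeq_mem_Φ ha.2 hb.2 n⟩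
  rcases le_abs'.1 (one_le_abs_B_of_mem_Φ ha.2 hb.2) with hc | hc
  · refine hinf (-b) ⟨H.neg_mem hb.1, neg_mem_Φ hb.2⟩ (by rwa [Submodule.neg_mem_iff]) ?_
    rw [B_neg_right]
    linarith
  · exact hinf b hb hab hc
end
end

section
/- Every nonempty parabolic biclosed subset of Φ⁺ contains a simple root, i.e., an element of Δ = {α₁, α₂, α₃}. -/
open scoped NNReal

noncomputable section

/-- A rank-2 parabolic subsystem `w·(Span{αᵢ,αⱼ} ∩ Φ)`. -/
def IsRank2Parabolic (P : Set V) : Prop :=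
  ∃ w ∈ W, ∃ i j : Fin 3, i ≠ j ∧
    P = (fun x => w x) '' ((Submodule.span ℝ {α i, α j} : Set V) ∩ Φ)

/-- `R'` is closed in the set of positive roots `Φ'pos` of a subsystem. -/
def IsClosedIn (Φ'pos R' : Set V) : Prop := ∀ a ∈ R', ∀ b ∈ R', nnspan {a, b} ∩ Φ'pos ⊆ R'

/-- `R'` is biclosed in the set of positive roots `Φ'pos` of a subsystem. -/
def IsBiclosedIn (Φ'pos R' : Set V) : Prop :=
  R' ⊆ Φ'pos ∧ IsClosedIn Φ'pos R' ∧ IsClosedIn Φ'pos (Φ'pos \ R')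

/-- `R ⊆ Φ⁺` is parabolic biclosed if its intersection with every rank-2 parabolic
subsystem `Φ'` is biclosed in `Φ'⁺`. -/
def IsParabolicBiclosed (R : Set V) : Prop :=
  R ⊆ Φpos ∧ ∀ P, IsRank2Parabolic P → IsBiclosedIn (P ∩ Φpos) (R ∩ P)

/-!
The positive roots are exactly the roots `w·αₐ` of reduced words `w a`, i.e. words with no
letter immediately repeated: along such a word the coordinates stay nonnegative and the first
letter `j` keeps `⟨αⱼ, ρ⟩ ≥ 1`, which also rules out negative roots.

Take `β ∈ R` with the shortest word `l b c`, and write `l = l₀ u` with `u` the longest suffix in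
the letters `b, c`. Then `β = w₀·δ`, where `w₀` is spelled by `l₀` and `δ` is the root of the
reduced word `u b c`, a positive root in `span{α_b, α_c}`. So `β` is a nonnegative combination of
`w₀·α_b` and `w₀·α_c`, which are positive roots of the rank-2 parabolic subsystem
`w₀·(span{α_b, α_c} ∩ Φ)` with the shorter words `l₀ b`, `l₀ c`. As `Φ'⁺ \ R` is closed, one of
them lies in `R`, contradicting minimality; hence the shortest word is a single letter.
-/

namespace U3

lemma alpha_apply (i k : Fin 3) : α i k = if k = i then 1 else 0 := Pi.single_apply i 1 k

lemma B_alpha_left (k : Fin 3) (x : V) : B (α k) x = 2 * x k - ∑ i, x i := by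
  simp [B, α, Pi.single_apply]

lemma B_alpha_alpha (k j : Fin 3) : B (α k) (α j) = if k = j then 1 else -1 := by
  rw [B_alpha_left]
  fin_cases k <;> fin_cases j <;> norm_num [alpha_apply, Fin.sum_univ_three]

lemma B_alpha_reflect (i : Fin 3) (x : V) :
    B (α i) (x - (2 * B (α i) x) • α i) = - B (α i) x := by
  simp only [B_alpha_left, Pi.sub_apply, Pi.smul_apply, smul_eq_mul, Finset.sum_sub_distrib,
    ← Finset.mul_sum, alpha_apply, Finset.sum_ite_eq', Finset.mem_univ, if_true]
  ring

def s (i : Fin 3) : V ≃ₗ[ℝ] V where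
  toFun x := x - (2 * B (α i) x) • α i
  invFun x := x - (2 * B (α i) x) • α i
  map_add' x y := by
    ext k; simp only [B_alpha_left, Pi.add_apply, Pi.sub_apply, Pi.smul_apply,
      Finset.sum_add_distrib, smul_eq_mul]; ring
  map_smul' c x := by
    ext k; simp only [B_alpha_left, Pi.smul_apply, Pi.sub_apply, smul_eq_mul,
      RingHom.id_apply, ← Finset.mul_sum]; ring
  left_inv x := by simp only [B_alpha_reflect]; module
  right_inv x := by simp only [B_alpha_reflect]; module

lemma s_apply (i : Fin 3) (x : V) : s i x = x - (2 * B (α i) x) • α i := rfl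

lemma s_s (i : Fin 3) (x : V) : s i (s i x) = x := (s i).left_inv x

lemma s_alpha_self (i : Fin 3) : s i (α i) = -α i := by
  rw [s_apply, B_alpha_alpha, if_pos rfl]; module

lemma s_mem {p : Submodule ℝ V} {i : Fin 3} {x : V} (hi : α i ∈ p) (hx : x ∈ p) : s i x ∈ p :=
  p.sub_mem hx (p.smul_mem _ hi)

lemma s_mem_W (i : Fin 3) : s i ∈ W := Subgroup.subset_closure ⟨i, fun _ => rfl⟩

lemma IsSimpleReflection.exists_eq_s {f : V ≃ₗ[ℝ] V} (hf : IsSimpleReflection f) :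
    ∃ i, f = s i :=
  let ⟨i, hi⟩ := hf; ⟨i, LinearEquiv.ext hi⟩

lemma s_inv (i : Fin 3) : (s i)⁻¹ = s i :=
  inv_eq_of_mul_eq_one_right (LinearEquiv.ext (s_s i))

def word (l : List (Fin 3)) : V ≃ₗ[ℝ] V := (l.map s).prod

lemma word_cons_apply (i : Fin 3) (l : List (Fin 3)) (x : V) :
    word (i :: l) x = s i (word l x) := rfl

lemma word_append_apply (l₁ l₂ : List (Fin 3)) (x : V) :
    word (l₁ ++ l₂) x = word l₁ (word l₂ x) := by
  simp [word, LinearEquiv.mul_apply]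

lemma word_mem_W (l : List (Fin 3)) : word l ∈ W :=
  W.list_prod_mem (by simpa using fun i _ => s_mem_W i)

lemma word_alpha_mem_Φ (l : List (Fin 3)) (a : Fin 3) : word l (α a) ∈ Φ :=
  ⟨word l, word_mem_W l, a, rfl⟩

lemma word_mem_span_pair {b c : Fin 3} {u : List (Fin 3)} (hu : ∀ x ∈ u, x = b ∨ x = c)
    {v : V} (hv : v ∈ Submodule.span ℝ {α b, α c}) :
    word u v ∈ Submodule.span ℝ {α b, α c} := by
  induction u with
  | nil => exact hv
  | cons x u ih =>
    rw [List.forall_mem_cons] at hu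
    refine s_mem ?_ (ih hu.2)
    rcases hu.1 with rfl | rfl
    exacts [Submodule.subset_span (by simp), Submodule.subset_span (by simp)]

/-- In `U₃` a word is reduced exactly when no letter is immediately repeated. -/
def IsReduced (l : List (Fin 3)) : Prop := l.IsChain (· ≠ ·)

lemma isReduced_append_singleton {l : List (Fin 3)} {a : Fin 3} :
    IsReduced (l ++ [a]) ↔ IsReduced l ∧ ∀ x ∈ l.getLast?, x ≠ a := by
  simp [IsReduced, List.isChain_append]

/-- The invariant carried by the root of a reduced word with first letter `j`. -/
def LeadsWith (j : Fin 3) (ρ : V) : Prop := (∀ i, 0 ≤ ρ i) ∧ 1 ≤ B (α j) ρ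

lemma leadsWith_alpha (j : Fin 3) : LeadsWith j (α j) :=
  ⟨fun i => by rw [alpha_apply]; split_ifs <;> norm_num, by simp [B_alpha_alpha]⟩

/-- `B (α j) ρ + B (α k) ρ = -2 ρₗ` for the third index `l`. -/
lemma B_alpha_add_B_alpha_nonpos {ρ : V} (hρ : ∀ i, 0 ≤ ρ i) {j k : Fin 3} (hjk : j ≠ k) :
    B (α j) ρ + B (α k) ρ ≤ 0 := by
  fin_cases j <;> fin_cases k <;> simp_all [B_alpha_left, Fin.sum_univ_three] <;>
    linarith [hρ 0, hρ 1, hρ 2]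

lemma LeadsWith.s {x j : Fin 3} {ρ : V} (h : LeadsWith x ρ) (hjx : j ≠ x) :
    LeadsWith j (s j ρ) := by
  have hB : B (α j) ρ ≤ -1 := by linarith [h.2, B_alpha_add_B_alpha_nonpos h.1 hjx]
  refine ⟨fun i => ?_, by rw [s_apply, B_alpha_reflect]; linarith⟩
  rw [s_apply, Pi.sub_apply, Pi.smul_apply, smul_eq_mul, alpha_apply]
  split_ifs <;> nlinarith [h.1 i]

lemma leadsWith_word {a : Fin 3} :
    ∀ {l : List (Fin 3)}, IsReduced (l ++ [a]) → ∀ j ∈ (l ++ [a]).head?,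
      LeadsWith j (word l (α a))
  | [], _, j, hj => by simp_all [leadsWith_alpha, word]
  | x :: l, hred, j, hj => by
    obtain ⟨y, hy⟩ : ∃ y, y ∈ (l ++ [a]).head? := by cases l <;> simp
    simp only [List.cons_append, List.head?_cons, Option.mem_def, Option.some.injEq] at hj
    subst hj
    rw [IsReduced, List.cons_append, List.isChain_cons] at hred
    exact (leadsWith_word hred.2 y hy).s (hred.1 y hy)

def IsReducedRoot (ρ : V) : Prop := ∃ l a, IsReduced (l ++ [a]) ∧ word l (α a) = ρ

lemma IsReducedRoot.exists_leadsWith {ρ : V} (h : IsReducedRoot ρ) : ∃ j, LeadsWith j ρ := by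
  obtain ⟨l, a, hred, rfl⟩ := h
  obtain ⟨j, hj⟩ : ∃ j, j ∈ (l ++ [a]).head? := by cases l <;> simp
  exact ⟨j, leadsWith_word hred j hj⟩

lemma IsReducedRoot.nonneg {ρ : V} (h : IsReducedRoot ρ) (i : Fin 3) : 0 ≤ ρ i :=
  let ⟨_, hj⟩ := h.exists_leadsWith; hj.1 i

lemma IsReducedRoot.not_nonneg_neg {ρ : V} (h : IsReducedRoot ρ) : ¬ ∀ i, 0 ≤ -ρ i := by
  intro hneg
  obtain ⟨j, hρ, hB⟩ := h.exists_leadsWith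
  have : ρ = 0 := funext fun i => le_antisymm (by simpa using hneg i) (hρ i)
  norm_num [this, B] at hB

lemma IsReducedRoot.s {ρ : V} (h : IsReducedRoot ρ) (i : Fin 3) :
    IsReducedRoot (s i ρ) ∨ IsReducedRoot (-s i ρ) := by
  obtain ⟨l, a, hred, rfl⟩ := h
  cases l with
  | nil =>
    by_cases hia : i = a
    · subst hia
      exact .inr ⟨[], i, hred, by simp [word, s_alpha_self]⟩
    · refine .inl ⟨[i], a, ?_, rfl⟩
      simpa [IsReduced] using hia
  | cons x l =>
    by_cases hix : i = x
    · subst hix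
      exact .inl ⟨l, a, List.IsChain.tail hred, by rw [word_cons_apply, s_s]⟩
    · refine .inl ⟨i :: x :: l, a, ?_, rfl⟩
      simpa [IsReduced, List.isChain_cons_cons] using ⟨hix, hred⟩

lemma isReducedRoot_or_neg_of_mem_Φ {ρ : V} (hρ : ρ ∈ Φ) :
    IsReducedRoot ρ ∨ IsReducedRoot (-ρ) := by
  obtain ⟨w, hw, a, rfl⟩ := hρ
  suffices ∀ ρ, IsReducedRoot ρ ∨ IsReducedRoot (-ρ) → IsReducedRoot (w ρ) ∨ IsReducedRoot (-w ρ)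
    from this _ (.inl ⟨[], a, List.isChain_singleton a, rfl⟩)
  have hs (i : Fin 3) (ρ : V) (h : IsReducedRoot ρ ∨ IsReducedRoot (-ρ)) :
      IsReducedRoot (s i ρ) ∨ IsReducedRoot (-s i ρ) := by
    rcases h with h | h
    · exact h.s i
    · simpa [or_comm] using h.s i
  induction hw using Subgroup.closure_induction'' with
  | mem f hf =>
    obtain ⟨i, rfl⟩ := IsSimpleReflection.exists_eq_s hf
    exact hs i
  | inv_mem f hf =>
    obtain ⟨i, rfl⟩ := IsSimpleReflection.exists_eq_s hf
    rw [s_inv]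
    exact hs i
  | one => exact fun ρ h => h
  | mul f g _ _ hf hg => exact fun ρ h => hf _ (hg ρ h)

lemma mem_nnspan_Δ_iff {x : V} : x ∈ nnspan Δ ↔ ∀ i, 0 ≤ x i := by
  constructor
  · intro hx
    induction hx using Submodule.span_induction with
    | mem y hy =>
      obtain ⟨j, rfl⟩ := hy
      exact (leadsWith_alpha j).1
    | zero => simp
    | add y z _ _ hy hz => exact fun i => add_nonneg (hy i) (hz i)
    | smul c y _ hy => exact fun i => mul_nonneg c.2 (hy i)
  · intro hx
    have hsum : x = ∑ i, (x i).toNNReal • α i := by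
      ext k; simp [NNReal.smul_def, alpha_apply, Real.coe_toNNReal _ (hx _)]
    rw [nnspan, SetLike.mem_coe, hsum]
    exact Submodule.sum_mem _ fun i _ => Submodule.smul_mem _ _ (Submodule.subset_span ⟨i, rfl⟩)

lemma mem_Φpos_iff {ρ : V} : ρ ∈ Φpos ↔ IsReducedRoot ρ := by
  refine ⟨fun ⟨hΦ, hpos⟩ => ?_, fun h => ⟨?_, mem_nnspan_Δ_iff.2 h.nonneg⟩⟩
  · refine (isReducedRoot_or_neg_of_mem_Φ hΦ).resolve_right fun hneg => ?_
    exact hneg.not_nonneg_neg (by simpa using mem_nnspan_Δ_iff.1 hpos)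
  · obtain ⟨l, a, -, rfl⟩ := h
    exact word_alpha_mem_Φ l a

lemma IsReduced.exists_split {l : List (Fin 3)} (hl : IsReduced l) (b c : Fin 3) :
    ∃ l₀ u, l₀ ++ u = l ∧ (∀ x ∈ u, x = b ∨ x = c) ∧
      ∀ d, d = b ∨ d = c → IsReduced (l₀ ++ [d]) := by
  let p : Fin 3 → Bool := fun x => x = b ∨ x = c
  refine ⟨l.rdropWhile p, l.rtakeWhile p, List.rdropWhile_append_rtakeWhile,
    fun x hx => by simpa [p] using List.mem_rtakeWhile_imp hx,
    fun d hd => isReduced_append_singleton.2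
      ⟨hl.prefix (List.rdropWhile_prefix p l), fun x hx => ?_⟩⟩
  obtain ⟨hne, rfl⟩ := List.mem_getLast?_eq_getLast hx
  have := List.rdropWhile_last_not p l hne
  grind

lemma smul_add_smul_mem_nnspan_pair {x y : ℝ} (hx : 0 ≤ x) (hy : 0 ≤ y) (u v : V) :
    x • u + y • v ∈ nnspan {u, v} := by
  have hu : u ∈ Submodule.span ℝ≥0 ({u, v} : Set V) := Submodule.subset_span (by simp)
  have hv : v ∈ Submodule.span ℝ≥0 ({u, v} : Set V) := Submodule.subset_span (by simp)
  simpa [nnspan, NNReal.smul_def, hx, hy] using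
    add_mem (Submodule.smul_mem _ x.toNNReal hu) (Submodule.smul_mem _ y.toNNReal hv)

lemma exists_nonneg_of_mem_span_pair {b c : Fin 3} (hbc : b ≠ c) {δ : V}
    (hδ : δ ∈ Submodule.span ℝ {α b, α c}) (hpos : ∀ i, 0 ≤ δ i) :
    ∃ x y : ℝ, 0 ≤ x ∧ 0 ≤ y ∧ δ = x • α b + y • α c := by
  obtain ⟨x, y, rfl⟩ := Submodule.mem_span_pair.1 hδ
  refine ⟨x, y, ?_, ?_, rfl⟩
  · simpa [alpha_apply, hbc] using hpos b
  · simpa [alpha_apply, hbc.symm] using hpos c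

end U3

namespace IsParabolicBiclosed

open U3

lemma mem_or_mem {R P : Set V} (hR : IsParabolicBiclosed R)
    (hP : IsRank2Parabolic P) {β γ₁ γ₂ : V} (hβ : β ∈ R ∩ P) (hγ₁ : γ₁ ∈ P ∩ Φpos)
    (hγ₂ : γ₂ ∈ P ∩ Φpos) (hβγ : β ∈ nnspan {γ₁, γ₂}) : γ₁ ∈ R ∨ γ₂ ∈ R := by
  by_contra! h
  exact ((hR.2 P hP).2.2 γ₁ ⟨hγ₁, fun h₁ => h.1 h₁.1⟩ γ₂ ⟨hγ₂, fun h₂ => h.2 h₂.1⟩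
    ⟨hβγ, hβ.2, hR.1 hβ.1⟩).2 hβ

lemma exists_shorter_word_mem {R : Set V} (hR : IsParabolicBiclosed R)
    {l : List (Fin 3)} {b c : Fin 3} (hred : IsReduced (l ++ [b] ++ [c]))
    (hmem : word (l ++ [b]) (α c) ∈ R) :
    ∃ l₀ d, l₀.length ≤ l.length ∧ IsReduced (l₀ ++ [d]) ∧ word l₀ (α d) ∈ R := by
  obtain ⟨l₀, u, rfl, hu, hred₀⟩ :=
    IsReduced.exists_split hred.left_of_append.left_of_append b c
  have hbc : b ≠ c := (isReduced_append_singleton.1 hred).2 b (by simp)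
  set δ := word (u ++ [b]) (α c)
  have hδ : IsReducedRoot δ := ⟨u ++ [b], c, hred.suffix ⟨l₀, by simp⟩, rfl⟩
  have hδspan : δ ∈ Submodule.span ℝ {α b, α c} := by
    refine word_mem_span_pair (fun x hx => ?_) (Submodule.subset_span (by simp))
    rcases List.mem_append.1 hx with hx | hx
    exacts [hu x hx, .inl (List.mem_singleton.1 hx)]
  obtain ⟨x, y, hx, hy, hδxy⟩ := exists_nonneg_of_mem_span_pair hbc hδspan hδ.nonneg
  have hβδ : word (l₀ ++ u ++ [b]) (α c) = word l₀ δ := by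
    rw [List.append_assoc, word_append_apply]
  have hβ : word (l₀ ++ u ++ [b]) (α c) = x • word l₀ (α b) + y • word l₀ (α c) := by
    rw [hβδ, hδxy, map_add, map_smul, map_smul]
  set P := (fun v => word l₀ v) '' ((Submodule.span ℝ {α b, α c} : Set V) ∩ Φ)
  have hP : IsRank2Parabolic P := ⟨_, word_mem_W l₀, b, c, hbc, rfl⟩
  have hγ (d : Fin 3) (hd : d = b ∨ d = c) : word l₀ (α d) ∈ P ∩ Φpos := by
    refine ⟨⟨α d, ⟨Submodule.subset_span ?_, word_alpha_mem_Φ [] d⟩, rfl⟩,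
      mem_Φpos_iff.2 ⟨l₀, d, hred₀ d hd, rfl⟩⟩
    rcases hd with rfl | rfl <;> simp
  have hβP : word (l₀ ++ u ++ [b]) (α c) ∈ P :=
    hβδ ▸ ⟨δ, ⟨hδspan, (mem_Φpos_iff.2 hδ).1⟩, rfl⟩
  have hlen : l₀.length ≤ (l₀ ++ u).length := by simp
  rcases hR.mem_or_mem hP ⟨hmem, hβP⟩ (hγ b (.inl rfl)) (hγ c (.inr rfl))
    (hβ ▸ smul_add_smul_mem_nnspan_pair hx hy _ _) with h | h
  exacts [⟨l₀, b, hlen, hred₀ b (.inl rfl), h⟩, ⟨l₀, c, hlen, hred₀ c (.inr rfl), h⟩]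

lemma exists_alpha_mem_of_word_mem {R : Set V} (hR : IsParabolicBiclosed R)
    {l : List (Fin 3)} {a : Fin 3} (hred : IsReduced (l ++ [a])) (hmem : word l (α a) ∈ R) :
    ∃ i, α i ∈ R := by
  induction hn : l.length using Nat.strong_induction_on generalizing l a with
  | _ n ih =>
    rcases l.eq_nil_or_concat' with rfl | ⟨l', b, rfl⟩
    · exact ⟨a, hmem⟩
    · obtain ⟨l₀, d, hlen, hred₀, hmem₀⟩ := hR.exists_shorter_word_mem hred hmem
      exact ih l₀.length (by simp at hn; omega) hred₀ hmem₀ rfl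

end IsParabolicBiclosed

/-- Every nonempty parabolic biclosed subset of `Φ⁺` contains a simple root. -/
theorem parabolic_biclosed_contains_simple (R : Set V)
    (hR : IsParabolicBiclosed R) (hne : R.Nonempty) :
    ∃ i : Fin 3, α i ∈ R := by
  obtain ⟨β, hβ⟩ := hne
  obtain ⟨l, a, hred, rfl⟩ := U3.mem_Φpos_iff.1 (hR.1 hβ)
  exact hR.exists_alpha_mem_of_word_mem hred hβ
end
end
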